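/- For all x, y ∈ ℝ, the Airy kernel satisfies K(x,y) + x·∂xK(x,y) + y·∂yK(x,y) − ∂x³K(x,y) − ∂y³K(x,y) = 0, i.e. ((y∂y − ∂y³) + (x∂x − ∂x³))K(x,y) = −K(x,y), where ∂x and ∂y denote partial differentiation in the first and second argument respectively. -/

import Mathlib

open MeasureTheory Real Filter Set
open scoped ContDiff

/-- From `exp z * f z → 0` and continuity, get exponential decay bound on `[a, ∞)`. -/
lemma airy_decay_bound (f : ℝ → ℝ) (hf : Continuous f)
    (h : Tendsto (fun z => Real.exp z * f z) atTop (nhds 0)) (a : ℝ) :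
    ∃ C, 1 ≤ C ∧ ∀ z, a ≤ z → |f z| ≤ C * Real.exp (-z) := by
  obtain ⟨M, hM⟩ := Metric.tendsto_atTop.mp h 1 one_pos
  set M' := max M a with hM'
  obtain ⟨B, hB⟩ := (isCompact_Icc (a := a) (b := M')).exists_bound_of_continuousOn
    hf.continuousOn
  refine ⟨max 1 (B * Real.exp M'), le_max_left _ _, fun z hz => ?_⟩
  rcases le_or_gt M' z with hzM | hzM
  · have h1 := hM z (le_trans (le_max_left _ _) hzM)
    rw [Real.dist_eq, sub_zero, abs_mul, Real.abs_exp] at h1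
    have h2 : |f z| ≤ Real.exp (-z) := by
      rw [Real.exp_neg]
      rw [← mul_le_mul_iff_right₀ (Real.exp_pos z)]
      rw [mul_inv_cancel₀ (ne_of_gt (Real.exp_pos z))]
      exact h1.le
    calc |f z| ≤ Real.exp (-z) := h2
      _ = 1 * Real.exp (-z) := (one_mul _).symm
      _ ≤ max 1 (B * Real.exp M') * Real.exp (-z) := by
          exact mul_le_mul_of_nonneg_right (le_max_left _ _) (Real.exp_pos _).le
  · have hzmem : z ∈ Icc a M' := ⟨hz, hzM.le⟩
    have h1 : |f z| ≤ B := by simpa [Real.norm_eq_abs] using hB z hzmem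
    have hB0 : 0 ≤ B := (abs_nonneg _).trans h1
    calc |f z| ≤ B := h1
      _ = B * Real.exp M' * Real.exp (-M') := by
          rw [mul_assoc, ← Real.exp_add, add_neg_cancel, Real.exp_zero, mul_one]
      _ ≤ B * Real.exp M' * Real.exp (-z) := by
          apply mul_le_mul_of_nonneg_left (Real.exp_le_exp.mpr (by linarith)) (by positivity)
      _ ≤ max 1 (B * Real.exp M') * Real.exp (-z) := by
          exact mul_le_mul_of_nonneg_right (le_max_right _ _) (Real.exp_pos _).le

/-- Integrability from an exponential bound on `(0, ∞)`. -/
lemma airy_integrableOn_of_exp_bound {F : ℝ → ℝ} (hF : Continuous F) {C : ℝ}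
    (h : ∀ z, 0 < z → |F z| ≤ C * Real.exp (-z)) : IntegrableOn F (Ioi 0) := by
  have hg : IntegrableOn (fun z => C * Real.exp (-1 * z)) (Ioi (0:ℝ)) :=
    (exp_neg_integrableOn_Ioi 0 one_pos).const_mul C
  refine hg.mono' hF.aestronglyMeasurable ?_
  filter_upwards [ae_restrict_mem measurableSet_Ioi] with z hz
  simpa [Real.norm_eq_abs, neg_one_mul] using h z hz

lemma airy_shift_decay {f : ℝ → ℝ}
    (hfd : ∀ a, ∃ C, 1 ≤ C ∧ ∀ z, a ≤ z → |f z| ≤ C * Real.exp (-z)) (y : ℝ) :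
    ∃ C, 0 < C ∧ ∀ l, 0 ≤ l → |f (y + l)| ≤ C * Real.exp (-l) := by
  obtain ⟨C, hC1, hC⟩ := hfd y
  refine ⟨C * Real.exp (-y), by positivity, fun l hl => ?_⟩
  calc |f (y + l)| ≤ C * Real.exp (-(y + l)) := hC (y + l) (by linarith)
    _ = C * Real.exp (-y) * Real.exp (-l) := by rw [mul_assoc, ← Real.exp_add]; ring_nf

lemma airy_lexp_le_one {l : ℝ} (hl : 0 ≤ l) : l * Real.exp (-l) ≤ 1 := by
  have h1 : l ≤ Real.exp l := (Real.add_one_le_exp l).trans' (by linarith)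
  have := mul_le_mul_of_nonneg_right h1 (Real.exp_pos (-l)).le
  rwa [← Real.exp_add, add_neg_cancel, Real.exp_zero] at this

lemma airy_integrableOn_shift_mul {f g : ℝ → ℝ} (hfc : Continuous f) (hgc : Continuous g)
    (hfd : ∀ a, ∃ C, 1 ≤ C ∧ ∀ z, a ≤ z → |f z| ≤ C * Real.exp (-z))
    (hgd : ∃ C, 0 < C ∧ ∀ l, 0 ≤ l → |g l| ≤ C * Real.exp (-l)) (t : ℝ) :
    IntegrableOn (fun l => f (t + l) * g l) (Ioi 0) := by
  obtain ⟨Cf, hCf1, hCf⟩ := hfd t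
  obtain ⟨Cg, hCg0, hCg⟩ := hgd
  apply airy_integrableOn_of_exp_bound
    (show Continuous fun l => f (t + l) * g l from
      (hfc.comp (continuous_const.add continuous_id)).mul hgc)
    (C := Cf * Real.exp (-t) * Cg)
  intro l hl
  calc |f (t + l) * g l| = |f (t + l)| * |g l| := abs_mul _ _
    _ ≤ (Cf * Real.exp (-(t + l))) * (Cg * Real.exp (-l)) :=
        mul_le_mul (hCf _ (by linarith)) (hCg _ hl.le) (abs_nonneg _) (by positivity)
    _ = (Cf * Real.exp (-t) * Cg * Real.exp (-l)) * Real.exp (-l) := by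
        rw [show (-(t + l)) = -t + -l by ring, Real.exp_add]; ring
    _ ≤ (Cf * Real.exp (-t) * Cg * Real.exp (-l)) * 1 :=
        mul_le_mul_of_nonneg_left (Real.exp_le_one_iff.mpr (by linarith)) (by positivity)
    _ = Cf * Real.exp (-t) * Cg * Real.exp (-l) := mul_one _

lemma airy_integrableOn_lin_shift_mul {f g : ℝ → ℝ} (hfc : Continuous f) (hgc : Continuous g)
    (hfd : ∀ a, ∃ C, 1 ≤ C ∧ ∀ z, a ≤ z → |f z| ≤ C * Real.exp (-z))
    (hgd : ∃ C, 0 < C ∧ ∀ l, 0 ≤ l → |g l| ≤ C * Real.exp (-l)) (t : ℝ) :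
    IntegrableOn (fun l => l * (f (t + l) * g l)) (Ioi 0) := by
  obtain ⟨Cf, hCf1, hCf⟩ := hfd t
  obtain ⟨Cg, hCg0, hCg⟩ := hgd
  apply airy_integrableOn_of_exp_bound
    (show Continuous fun l => l * (f (t + l) * g l) from
      continuous_id.mul ((hfc.comp (continuous_const.add continuous_id)).mul hgc))
    (C := Cf * Real.exp (-t) * Cg)
  intro l hl
  calc |l * (f (t + l) * g l)| = l * (|f (t + l)| * |g l|) := by
        rw [abs_mul, abs_mul, abs_of_pos hl]
    _ ≤ l * ((Cf * Real.exp (-(t + l))) * (Cg * Real.exp (-l))) := by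
        refine mul_le_mul_of_nonneg_left ?_ hl.le
        exact mul_le_mul (hCf _ (by linarith)) (hCg _ hl.le) (abs_nonneg _) (by positivity)
    _ = (l * Real.exp (-l)) * (Cf * Real.exp (-t) * Cg * Real.exp (-l)) := by
        rw [show (-(t + l)) = -t + -l by ring, Real.exp_add]; ring
    _ ≤ 1 * (Cf * Real.exp (-t) * Cg * Real.exp (-l)) :=
        mul_le_mul_of_nonneg_right (airy_lexp_le_one hl.le) (by positivity)
    _ = Cf * Real.exp (-t) * Cg * Real.exp (-l) := one_mul _

lemma airy_exp_neg_integrable : IntegrableOn (fun l => Real.exp (-l)) (Ioi (0:ℝ)) := by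
  have := exp_neg_integrableOn_Ioi (0:ℝ) one_pos
  simpa [neg_one_mul] using this

/-- Differentiation under the integral sign for our parametric integrals. -/
lemma airy_hasDerivAt_param {f f' g : ℝ → ℝ}
    (hdf : ∀ z, HasDerivAt f (f' z) z)
    (hfc : Continuous f) (hf'c : Continuous f') (hgc : Continuous g)
    (hfd : ∀ a, ∃ C, 1 ≤ C ∧ ∀ z, a ≤ z → |f z| ≤ C * Real.exp (-z))
    (hf'd : ∀ a, ∃ C, 1 ≤ C ∧ ∀ z, a ≤ z → |f' z| ≤ C * Real.exp (-z))
    (hgd : ∃ C, 0 < C ∧ ∀ l, 0 ≤ l → |g l| ≤ C * Real.exp (-l)) (x : ℝ) :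
    HasDerivAt (fun t => ∫ l in Ioi (0:ℝ), f (t + l) * g l)
      (∫ l in Ioi (0:ℝ), f' (x + l) * g l) x := by
  have hgd' := hgd
  obtain ⟨Cf, hCf1, hCf⟩ := hf'd (x - 1)
  obtain ⟨Cg, hCg0, hCg⟩ := hgd
  have h_bound : ∀ᵐ l ∂(volume.restrict (Ioi (0:ℝ))), ∀ t ∈ Metric.ball x 1,
      ‖f' (t + l) * g l‖ ≤ Cf * Real.exp (-(x - 1)) * Cg * Real.exp (-l) := by
    rw [ae_restrict_iff' measurableSet_Ioi]
    refine Eventually.of_forall fun l hl => ?_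
    intro t ht
    rw [Metric.mem_ball, Real.dist_eq, abs_sub_lt_iff] at ht
    have hl' : (0:ℝ) < l := hl
    have harg : x - 1 ≤ t + l := by linarith [ht.2]
    rw [Real.norm_eq_abs]
    calc |f' (t + l) * g l| = |f' (t + l)| * |g l| := abs_mul _ _
      _ ≤ (Cf * Real.exp (-(t + l))) * (Cg * Real.exp (-l)) :=
          mul_le_mul (hCf _ harg) (hCg _ hl'.le) (abs_nonneg _) (by positivity)
      _ ≤ (Cf * Real.exp (-((x - 1) + l))) * (Cg * Real.exp (-l)) := by
          refine mul_le_mul_of_nonneg_right ?_ (by positivity)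
          exact mul_le_mul_of_nonneg_left (Real.exp_le_exp.mpr (by linarith)) (by linarith)
      _ = (Cf * Real.exp (-(x - 1)) * Cg * Real.exp (-l)) * Real.exp (-l) := by
          rw [show (-((x - 1) + l)) = -(x - 1) + -l by ring, Real.exp_add]; ring
      _ ≤ (Cf * Real.exp (-(x - 1)) * Cg * Real.exp (-l)) * 1 :=
          mul_le_mul_of_nonneg_left (Real.exp_le_one_iff.mpr (by linarith)) (by positivity)
      _ = Cf * Real.exp (-(x - 1)) * Cg * Real.exp (-l) := mul_one _
  have h_bound_int : Integrable (fun l => Cf * Real.exp (-(x - 1)) * Cg * Real.exp (-l))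
      (volume.restrict (Ioi (0:ℝ))) := airy_exp_neg_integrable.const_mul _
  have h_diff : ∀ᵐ l ∂(volume.restrict (Ioi (0:ℝ))), ∀ t ∈ Metric.ball x 1,
      HasDerivAt (fun t => f (t + l) * g l) (f' (t + l) * g l) t := by
    refine Eventually.of_forall fun l => ?_
    intro t _
    have h1 : HasDerivAt (fun t => f (t + l)) (f' (t + l)) t := by
      simpa [Function.comp_def] using (hdf (t + l)).comp t ((hasDerivAt_id t).add_const l)
    exact h1.mul_const (g l)
  have main := hasDerivAt_integral_of_dominated_loc_of_deriv_le
    (F := fun t l => f (t + l) * g l) (F' := fun t l => f' (t + l) * g l)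
    (Metric.ball_mem_nhds x one_pos)
    (Eventually.of_forall fun t =>
      ((hfc.comp (continuous_const.add continuous_id)).mul hgc).aestronglyMeasurable)
    (airy_integrableOn_shift_mul hfc hgc hfd hgd' x)
    (((hf'c.comp (continuous_const.add continuous_id)).mul hgc).aestronglyMeasurable)
    h_bound h_bound_int h_diff
  exact main.2

/-- decay of A -/
lemma airy_dA (A : ℝ → ℝ) (hA : ContDiff ℝ (⊤ : ℕ∞) A)
    (hLim : ∀ (c : ℝ) (n : ℕ),
      Tendsto (fun z => z ^ n * Real.exp (c * z) * A z) atTop (nhds 0)) :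
    ∀ a, ∃ C, 1 ≤ C ∧ ∀ z, a ≤ z → |A z| ≤ C * Real.exp (-z) :=
  airy_decay_bound A hA.continuous ((hLim 1 0).congr fun z => by
    rw [pow_zero, one_mul, one_mul])

lemma airy_dA' (A : ℝ → ℝ) (hA : ContDiff ℝ (⊤ : ℕ∞) A)
    (hLim' : ∀ (c : ℝ) (n : ℕ),
      Tendsto (fun z => z ^ n * Real.exp (c * z) * deriv A z) atTop (nhds 0)) :
    ∀ a, ∃ C, 1 ≤ C ∧ ∀ z, a ≤ z → |deriv A z| ≤ C * Real.exp (-z) :=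
  airy_decay_bound (deriv A) (hA.continuous_deriv (by simp)) ((hLim' 1 0).congr fun z => by
    rw [pow_zero, one_mul, one_mul])

lemma airy_dA2 (A : ℝ → ℝ) (hA : ContDiff ℝ (⊤ : ℕ∞) A)
    (hLim : ∀ (c : ℝ) (n : ℕ),
      Tendsto (fun z => z ^ n * Real.exp (c * z) * A z) atTop (nhds 0)) :
    ∀ a, ∃ C, 1 ≤ C ∧ ∀ z, a ≤ z → |z * A z| ≤ C * Real.exp (-z) :=
  airy_decay_bound (fun z => z * A z) (continuous_id.mul hA.continuous)
    ((hLim 1 1).congr fun z => by rw [pow_one, one_mul]; ring)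

lemma airy_dA3 (A : ℝ → ℝ) (hA : ContDiff ℝ (⊤ : ℕ∞) A)
    (hLim : ∀ (c : ℝ) (n : ℕ),
      Tendsto (fun z => z ^ n * Real.exp (c * z) * A z) atTop (nhds 0))
    (hLim' : ∀ (c : ℝ) (n : ℕ),
      Tendsto (fun z => z ^ n * Real.exp (c * z) * deriv A z) atTop (nhds 0)) :
    ∀ a, ∃ C, 1 ≤ C ∧ ∀ z, a ≤ z → |A z + z * deriv A z| ≤ C * Real.exp (-z) := by
  apply airy_decay_bound (fun z => A z + z * deriv A z)
    (hA.continuous.add (continuous_id.mul (hA.continuous_deriv (by simp))))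
  have h := (hLim 1 0).add (hLim' 1 1)
  rw [add_zero] at h
  exact h.congr fun z => by simp only [pow_zero, pow_one, one_mul]; ring

/-- Third derivative formula in the first variable. -/
lemma airy_half (A : ℝ → ℝ) (hA : ContDiff ℝ (⊤ : ℕ∞) A)
    (hAiry : ∀ x : ℝ, deriv (deriv A) x = x * A x)
    (hLim : ∀ (c : ℝ) (n : ℕ),
      Tendsto (fun z => z ^ n * Real.exp (c * z) * A z) atTop (nhds 0))
    (hLim' : ∀ (c : ℝ) (n : ℕ),
      Tendsto (fun z => z ^ n * Real.exp (c * z) * deriv A z) atTop (nhds 0))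
    (x y : ℝ) :
    iteratedDeriv 3 (fun t => ∫ l in Ioi (0:ℝ), A (t + l) * A (y + l)) x
      = (∫ l in Ioi (0:ℝ), A (x + l) * A (y + l))
        + x * deriv (fun t => ∫ l in Ioi (0:ℝ), A (t + l) * A (y + l)) x
        + ∫ l in Ioi (0:ℝ), l * (deriv A (x + l) * A (y + l)) := by
  set A1 := deriv A with hA1
  have cA : Continuous A := hA.continuous
  have cA1 : Continuous A1 := hA.continuous_deriv (by simp)
  have cA2 : Continuous (fun z => z * A z) := continuous_id.mul cA
  have cA3 : Continuous (fun z => A z + z * A1 z) := cA.add (continuous_id.mul cA1)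
  have hA1cd : ContDiff ℝ ∞ A1 := by
    rw [hA1]; exact (contDiff_infty_iff_deriv.mp (hA.of_le (by simp))).2
  have hd0 : ∀ z, HasDerivAt A (A1 z) z := fun z => (hA.differentiable (by simp) z).hasDerivAt
  have hd1 : ∀ z, HasDerivAt A1 (z * A z) z := fun z => by
    have := (hA1cd.differentiable (by simp) z).hasDerivAt
    rwa [hAiry z] at this
  have hd2 : ∀ z, HasDerivAt (fun z => z * A z) (A z + z * A1 z) z := fun z => by
    have := (hasDerivAt_id z).mul (hd0 z)
    simpa [Pi.mul_def] using this
  have dA := airy_dA A hA hLim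
  have dA1 := airy_dA' A hA hLim'
  have dA2 := airy_dA2 A hA hLim
  have dA3 : ∀ a, ∃ C, 1 ≤ C ∧ ∀ z, a ≤ z → |A z + z * A1 z| ≤ C * Real.exp (-z) :=
    airy_dA3 A hA hLim hLim'
  have gdec : ∃ C, 0 < C ∧ ∀ l, 0 ≤ l → |A (y + l)| ≤ C * Real.exp (-l) :=
    airy_shift_decay dA y
  have gc : Continuous (fun l => A (y + l)) := cA.comp (continuous_const.add continuous_id)
  -- derivative chain
  have D1 : ∀ t, HasDerivAt (fun t => ∫ l in Ioi (0:ℝ), A (t + l) * A (y + l))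
      (∫ l in Ioi (0:ℝ), A1 (t + l) * A (y + l)) t := fun t =>
    airy_hasDerivAt_param hd0 cA cA1 gc dA dA1 gdec t
  have D2 : ∀ t, HasDerivAt (fun t => ∫ l in Ioi (0:ℝ), A1 (t + l) * A (y + l))
      (∫ l in Ioi (0:ℝ), (t + l) * A (t + l) * A (y + l)) t := fun t => by
    have := airy_hasDerivAt_param (f := A1) (f' := fun z => z * A z) hd1 cA1 cA2 gc dA1 dA2 gdec t
    exact this
  have D3 : ∀ t, HasDerivAt (fun t => ∫ l in Ioi (0:ℝ), (t + l) * A (t + l) * A (y + l))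
      (∫ l in Ioi (0:ℝ), (A (t + l) + (t + l) * A1 (t + l)) * A (y + l)) t := fun t => by
    have := airy_hasDerivAt_param (f := fun z => z * A z) (f' := fun z => A z + z * A1 z)
      hd2 cA2 cA3 gc dA2 dA3 gdec t
    exact this
  have e1 : deriv (fun t => ∫ l in Ioi (0:ℝ), A (t + l) * A (y + l))
      = fun t => ∫ l in Ioi (0:ℝ), A1 (t + l) * A (y + l) := funext fun t => (D1 t).deriv
  have e2 : deriv (fun t => ∫ l in Ioi (0:ℝ), A1 (t + l) * A (y + l))
      = fun t => ∫ l in Ioi (0:ℝ), (t + l) * A (t + l) * A (y + l) := funext fun t => (D2 t).deriv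
  have e3 : deriv (fun t => ∫ l in Ioi (0:ℝ), (t + l) * A (t + l) * A (y + l))
      = fun t => ∫ l in Ioi (0:ℝ), (A (t + l) + (t + l) * A1 (t + l)) * A (y + l) :=
    funext fun t => (D3 t).deriv
  have hiter : iteratedDeriv 3 (fun t => ∫ l in Ioi (0:ℝ), A (t + l) * A (y + l)) x
      = ∫ l in Ioi (0:ℝ), (A (x + l) + (x + l) * A1 (x + l)) * A (y + l) := by
    rw [show (3:ℕ) = 1 + 1 + 1 by norm_num, iteratedDeriv_succ, iteratedDeriv_succ,
      iteratedDeriv_one, e1, e2, e3]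
  rw [hiter, e1]
  -- split the integral
  have i1 : IntegrableOn (fun l => A (x + l) * A (y + l)) (Ioi 0) :=
    airy_integrableOn_shift_mul cA gc dA gdec x
  have i2 : IntegrableOn (fun l => x * (A1 (x + l) * A (y + l))) (Ioi 0) :=
    (airy_integrableOn_shift_mul cA1 gc dA1 gdec x).const_mul x
  have i3 : IntegrableOn (fun l => l * (A1 (x + l) * A (y + l))) (Ioi 0) :=
    airy_integrableOn_lin_shift_mul cA1 gc dA1 gdec x
  have hpt : ∀ l : ℝ, (A (x + l) + (x + l) * A1 (x + l)) * A (y + l)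
      = A (x + l) * A (y + l) + x * (A1 (x + l) * A (y + l))
        + l * (A1 (x + l) * A (y + l)) := fun l => by ring
  calc ∫ l in Ioi (0:ℝ), (A (x + l) + (x + l) * A1 (x + l)) * A (y + l)
      = ∫ l in Ioi (0:ℝ), (A (x + l) * A (y + l) + x * (A1 (x + l) * A (y + l))
          + l * (A1 (x + l) * A (y + l))) := by
        exact integral_congr_ae (Eventually.of_forall fun l => hpt l)
    _ = (∫ l in Ioi (0:ℝ), A (x + l) * A (y + l))
        + x * (∫ l in Ioi (0:ℝ), A1 (x + l) * A (y + l))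
        + ∫ l in Ioi (0:ℝ), l * (A1 (x + l) * A (y + l)) := by
        have i12 : IntegrableOn (fun l => A (x + l) * A (y + l)
            + x * (A1 (x + l) * A (y + l))) (Ioi 0) := i1.add i2
        rw [integral_add i12 i3, integral_add i1 i2, integral_const_mul]

lemma airy_ibp (A : ℝ → ℝ) (hA : ContDiff ℝ (⊤ : ℕ∞) A)
    (hLim : ∀ (c : ℝ) (n : ℕ),
      Tendsto (fun z => z ^ n * Real.exp (c * z) * A z) atTop (nhds 0))
    (hLim' : ∀ (c : ℝ) (n : ℕ),
      Tendsto (fun z => z ^ n * Real.exp (c * z) * deriv A z) atTop (nhds 0))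
    (x y : ℝ) :
    (∫ l in Ioi (0:ℝ), A (x + l) * A (y + l))
      + (∫ l in Ioi (0:ℝ), l * (deriv A (x + l) * A (y + l)))
      + (∫ l in Ioi (0:ℝ), l * (deriv A (y + l) * A (x + l))) = 0 := by
  set A1 := deriv A with hA1def
  have cA : Continuous A := hA.continuous
  have cA1 : Continuous A1 := hA.continuous_deriv (by simp)
  have hd0 : ∀ z, HasDerivAt A (A1 z) z := fun z => (hA.differentiable (by simp) z).hasDerivAt
  have dA := airy_dA A hA hLim
  have dA1 := airy_dA' A hA hLim'
  have i1 : IntegrableOn (fun l => A (x + l) * A (y + l)) (Ioi 0) :=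
    airy_integrableOn_shift_mul cA (cA.comp (continuous_const.add continuous_id)) dA
      (airy_shift_decay dA y) x
  have i3 : IntegrableOn (fun l => l * (A1 (x + l) * A (y + l))) (Ioi 0) :=
    airy_integrableOn_lin_shift_mul cA1 (cA.comp (continuous_const.add continuous_id)) dA1
      (airy_shift_decay dA y) x
  have i3' : IntegrableOn (fun l => l * (A1 (y + l) * A (x + l))) (Ioi 0) :=
    airy_integrableOn_lin_shift_mul cA1 (cA.comp (continuous_const.add continuous_id)) dA1
      (airy_shift_decay dA x) y
  have hderiv : ∀ l ∈ Ici (0:ℝ), HasDerivAt (fun u => u * (A (x + u) * A (y + u)))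
      (A (x + l) * A (y + l) + (l * (A1 (x + l) * A (y + l)) + l * (A1 (y + l) * A (x + l))))
      l := by
    intro l _
    have hx1 : HasDerivAt (fun u : ℝ => A (x + u)) (A1 (x + l)) l := by
      simpa [Function.comp_def] using (hd0 (x + l)).comp l ((hasDerivAt_id l).const_add x)
    have hy1 : HasDerivAt (fun u : ℝ => A (y + u)) (A1 (y + l)) l := by
      simpa [Function.comp_def] using (hd0 (y + l)).comp l ((hasDerivAt_id l).const_add y)
    have G := (hasDerivAt_id l).mul (hx1.mul hy1)
    simp only [id_eq, one_mul, Pi.mul_def] at G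
    rw [show A (x + l) * A (y + l) + l * (A1 (x + l) * A (y + l) + A (x + l) * A1 (y + l))
        = A (x + l) * A (y + l)
          + (l * (A1 (x + l) * A (y + l)) + l * (A1 (y + l) * A (x + l))) by ring] at G
    exact G
  have f'int : IntegrableOn (fun l => A (x + l) * A (y + l)
      + (l * (A1 (x + l) * A (y + l)) + l * (A1 (y + l) * A (x + l)))) (Ioi 0) :=
    i1.add (i3.add i3')
  obtain ⟨Cx, hCx0, hCx⟩ := airy_shift_decay dA x
  obtain ⟨Cy, hCy0, hCy⟩ := airy_shift_decay dA y
  have htend : Tendsto (fun l => l * (A (x + l) * A (y + l))) atTop (nhds 0) := by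
    have hb : ∀ᶠ l in atTop, ‖l * (A (x + l) * A (y + l))‖ ≤ Cx * Cy * Real.exp (-l) := by
      filter_upwards [eventually_ge_atTop (0:ℝ)] with l hl
      rw [Real.norm_eq_abs, abs_mul, abs_of_nonneg hl, abs_mul]
      calc l * (|A (x + l)| * |A (y + l)|)
          ≤ l * ((Cx * Real.exp (-l)) * (Cy * Real.exp (-l))) := by
            refine mul_le_mul_of_nonneg_left ?_ hl
            exact mul_le_mul (hCx l hl) (hCy l hl) (abs_nonneg _) (by positivity)
        _ = (l * Real.exp (-l)) * (Cx * Cy * Real.exp (-l)) := by ring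
        _ ≤ 1 * (Cx * Cy * Real.exp (-l)) :=
            mul_le_mul_of_nonneg_right (airy_lexp_le_one hl) (by positivity)
        _ = Cx * Cy * Real.exp (-l) := one_mul _
    have hg0 : Tendsto (fun l => Cx * Cy * Real.exp (-l)) atTop (nhds 0) := by
      have := Real.tendsto_exp_neg_atTop_nhds_zero.const_mul (Cx * Cy)
      simpa using this
    exact squeeze_zero_norm' hb hg0
  have key := integral_Ioi_of_hasDerivAt_of_tendsto' hderiv f'int htend
  have i23 : IntegrableOn (fun l => l * (A1 (x + l) * A (y + l))
      + l * (A1 (y + l) * A (x + l))) (Ioi 0) := i3.add i3'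
  rw [integral_add i1 i23, integral_add i3 i3'] at key
  norm_num at key
  linarith [key]

theorem airy_kernel_third_order_identity
    (A : ℝ → ℝ) (hA : ContDiff ℝ (⊤ : ℕ∞) A)
    (hAiry : ∀ x : ℝ, deriv (deriv A) x = x * A x)
    (hInt : ∀ (c : ℝ) (n : ℕ),
      IntegrableOn (fun z => z ^ n * Real.exp (c * z) * A z) (Ioi 0))
    (hInt' : ∀ (c : ℝ) (n : ℕ),
      IntegrableOn (fun z => z ^ n * Real.exp (c * z) * deriv A z) (Ioi 0))
    (hLim : ∀ (c : ℝ) (n : ℕ),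
      Tendsto (fun z => z ^ n * Real.exp (c * z) * A z) atTop (nhds 0))
    (hLim' : ∀ (c : ℝ) (n : ℕ),
      Tendsto (fun z => z ^ n * Real.exp (c * z) * deriv A z) atTop (nhds 0))
    (K : ℝ → ℝ → ℝ)
    (hK : ∀ x y : ℝ, K x y = ∫ l in Ioi (0:ℝ), A (x + l) * A (y + l))
    (x y : ℝ) :
    K x y + x * deriv (fun x' => K x' y) x + y * deriv (fun y' => K x y') y
      - iteratedDeriv 3 (fun x' => K x' y) x - iteratedDeriv 3 (fun y' => K x y') y
      = 0 := by
  have hKxf : (fun x' => K x' y) = fun t => ∫ l in Ioi (0:ℝ), A (t + l) * A (y + l) :=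
    funext fun t => hK t y
  have hKyf : (fun y' => K x y') = fun t => ∫ l in Ioi (0:ℝ), A (t + l) * A (x + l) :=
    funext fun t => by
      rw [hK]
      exact integral_congr_ae (Eventually.of_forall fun l => mul_comm _ _)
  have Hx := airy_half A hA hAiry hLim hLim' x y
  have Hy := airy_half A hA hAiry hLim hLim' y x
  have hT0 : (∫ l in Ioi (0:ℝ), A (y + l) * A (x + l))
      = ∫ l in Ioi (0:ℝ), A (x + l) * A (y + l) :=
    integral_congr_ae (Eventually.of_forall fun l => mul_comm _ _)
  have S := airy_ibp A hA hLim hLim' x y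
  rw [hK x y, hKxf, hKyf, Hx, Hy, hT0]
  linarith [S]
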